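/- Let (M,d,μ) be a metric measure space where μ has full support and satisfies the volume doubling property with constant C_VD ∈ (1,∞); set α := log₂ C_VD. Let β₁ > 0, let ε ∈ (0, 2β₁/(α+2β₁)), and set q := 2/(2−ε). Then there exists a constant C > 0, depending only on C_VD, β₁ and ε, such that for every x ∈ M and every ρ > 0, ∫_{M ∖ B(x,ρ)} V(x,d(x,y))^{−q(1−ε)} · (ρ/d(x,y))^{β₁ q(1−ε)} μ(dy) ≤ C · V(x,ρ)^{ε/(2−ε)}. -/

import Mathlib

/-!
Cut the complement of `B(x,ρ)` into the dyadic annuli `B(x,2ⁿ⁺¹ρ) ∖ B(x,2ⁿρ)`. On the `n`-th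
annulus the integrand is at most `V(x,2ⁿρ)^(-p) 2^(-nb)` and the annulus has measure at most
`C V(x,2ⁿρ)`, so its contribution is at most
`C 2^(-nb) V(x,2ⁿρ)^(1-p) ≤ C (C^(1-p) 2^(-b))ⁿ V(x,ρ)^(1-p)` by iterated doubling. With `p = q(1-ε)`, `b = β₁q(1-ε)` one has `1 - p = ε/(2-ε)`, and the
condition `ε < 2β₁/(α+2β₁)` is exactly `α(1-p) < b`, i.e. the ratio `C^(1-p) 2^(-b)` of the
geometric series is below `1`.
-/

open Set Metric MeasureTheory ENNReal

theorem compl_ball_subset_iUnion_annulus {M : Type*} [PseudoMetricSpace M] {x : M} {ρ : ℝ}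
    (hρ : 0 < ρ) :
    (ball x ρ)ᶜ ⊆ ⋃ n : ℕ, ball x (2 ^ (n + 1) * ρ) \ ball x (2 ^ n * ρ) := by
  intro y hy
  have hρy : 1 ≤ dist y x / ρ := by
    rw [one_le_div hρ]
    simpa using hy
  obtain ⟨n, hn, hn'⟩ := exists_nat_pow_near hρy one_lt_two
  refine mem_iUnion.mpr ⟨n, ?_, ?_⟩
  · simpa [mem_ball] using (div_lt_iff₀ hρ).mp hn'
  · simpa [mem_ball] using (le_div_iff₀ hρ).mp hn

section Doubling

variable {M : Type*} [PseudoMetricSpace M] [MeasurableSpace M] {μ : Measure M} {x : M}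

theorem measure_ball_two_pow_mul_le {K : ℝ≥0∞}
    (hdoub : ∀ r, 0 < r → μ (ball x (2 * r)) ≤ K * μ (ball x r)) {r : ℝ} (hr : 0 < r) (n : ℕ) :
    μ (ball x (2 ^ n * r)) ≤ K ^ n * μ (ball x r) := by
  induction n with
  | zero => simp
  | succ n ih =>
    calc μ (ball x (2 ^ (n + 1) * r)) = μ (ball x (2 * (2 ^ n * r))) := by ring_nf
      _ ≤ K * μ (ball x (2 ^ n * r)) := hdoub _ (by positivity)
      _ ≤ K * (K ^ n * μ (ball x r)) := by gcongr
      _ = K ^ (n + 1) * μ (ball x r) := by ring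

theorem tail_integrand_le_of_notMem_ball {p b ρ : ℝ} (hp : 0 ≤ p) (hb : 0 ≤ b) (hρ : 0 < ρ)
    {n : ℕ} {y : M} (hy : y ∉ ball x (2 ^ n * ρ)) :
    μ (ball x (dist x y)) ^ (-p) * ENNReal.ofReal ((ρ / dist x y) ^ b) ≤
      μ (ball x (2 ^ n * ρ)) ^ (-p) * ENNReal.ofReal (2 ^ (-b)) ^ n := by
  have hdist : 2 ^ n * ρ ≤ dist x y := by simpa [dist_comm] using hy
  have hdist0 : 0 < dist x y := lt_of_lt_of_le (by positivity) hdist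
  have hratio : ρ / dist x y ≤ ((2 : ℝ) ^ n)⁻¹ := by
    rw [div_le_iff₀ hdist0, ← div_eq_inv_mul, le_div_iff₀ (by positivity), mul_comm]
    exact hdist
  have hball : μ (ball x (dist x y)) ^ (-p) ≤ μ (ball x (2 ^ n * ρ)) ^ (-p) := by
    rw [ENNReal.rpow_neg, ENNReal.rpow_neg]
    exact ENNReal.inv_le_inv.mpr (ENNReal.rpow_le_rpow (measure_mono (ball_subset_ball hdist)) hp)
  have hpow : ENNReal.ofReal ((ρ / dist x y) ^ b) ≤ ENNReal.ofReal (2 ^ (-b)) ^ n := by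
    rw [← ENNReal.ofReal_pow (by positivity), Real.rpow_pow_comm zero_le_two,
      Real.rpow_neg (by positivity), ← Real.inv_rpow (by positivity)]
    exact ENNReal.ofReal_le_ofReal (Real.rpow_le_rpow (by positivity) hratio hb)
  exact mul_le_mul' hball hpow

variable {C p b ρ : ℝ} (hC : 0 ≤ C) (hp : 0 ≤ p) (hp1 : p ≤ 1) (hb : 0 ≤ b) (hρ : 0 < ρ)
  (hpos : ∀ r, 0 < r → μ (ball x r) ≠ 0) (hfin : ∀ r, 0 < r → μ (ball x r) ≠ ⊤)
  (hdoub : ∀ r, 0 < r → μ (ball x (2 * r)) ≤ ENNReal.ofReal C * μ (ball x r))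
include hC hp hp1 hb hρ hpos hfin hdoub

theorem setLIntegral_annulus_le (n : ℕ) :
    ∫⁻ y in ball x (2 ^ (n + 1) * ρ) \ ball x (2 ^ n * ρ),
        μ (ball x (dist x y)) ^ (-p) * ENNReal.ofReal ((ρ / dist x y) ^ b) ∂μ ≤
      ENNReal.ofReal C * ENNReal.ofReal (C ^ (1 - p) * 2 ^ (-b)) ^ n * μ (ball x ρ) ^ (1 - p) := by
  set V := μ (ball x (2 ^ n * ρ))
  have hr : 0 < 2 ^ n * ρ := by positivity
  have hannulus : μ (ball x (2 ^ (n + 1) * ρ) \ ball x (2 ^ n * ρ)) ≤ ENNReal.ofReal C * V :=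
    calc _ ≤ μ (ball x (2 * (2 ^ n * ρ))) :=
          measure_mono (sdiff_subset.trans (by rw [← mul_assoc, ← pow_succ']))
      _ ≤ ENNReal.ofReal C * V := hdoub _ hr
  calc _ ≤ ∫⁻ _ in ball x (2 ^ (n + 1) * ρ) \ ball x (2 ^ n * ρ),
          V ^ (-p) * ENNReal.ofReal (2 ^ (-b)) ^ n ∂μ :=
        setLIntegral_mono measurable_const fun _ hy =>
          tail_integrand_le_of_notMem_ball hp hb hρ hy.2
    _ ≤ V ^ (-p) * ENNReal.ofReal (2 ^ (-b)) ^ n * (ENNReal.ofReal C * V) := by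
        rw [setLIntegral_const]; gcongr
    _ = ENNReal.ofReal C * ENNReal.ofReal (2 ^ (-b)) ^ n * V ^ (1 - p) := by
        rw [sub_eq_neg_add, ENNReal.rpow_add _ _ (hpos _ hr) (hfin _ hr), ENNReal.rpow_one]; ring
    _ ≤ ENNReal.ofReal C * ENNReal.ofReal (2 ^ (-b)) ^ n *
          (ENNReal.ofReal C ^ n * μ (ball x ρ)) ^ (1 - p) := by
        gcongr
        exact measure_ball_two_pow_mul_le hdoub hρ n
    _ = _ := by
        rw [ENNReal.mul_rpow_of_nonneg _ _ (by linarith), ← ENNReal.ofReal_pow hC,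
          ENNReal.ofReal_rpow_of_nonneg (by positivity) (by linarith), ← Real.rpow_pow_comm hC,
          ENNReal.ofReal_mul (by positivity), mul_pow, ENNReal.ofReal_pow (by positivity)]
        ring

theorem lintegral_compl_ball_le (hratio : C ^ (1 - p) * 2 ^ (-b) < 1) :
    ∫⁻ y in (ball x ρ)ᶜ, μ (ball x (dist x y)) ^ (-p) * ENNReal.ofReal ((ρ / dist x y) ^ b) ∂μ ≤
      ENNReal.ofReal (C * (1 - C ^ (1 - p) * 2 ^ (-b))⁻¹) * μ (ball x ρ) ^ (1 - p) := by
  set r := C ^ (1 - p) * 2 ^ (-b)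
  calc _ ≤ ∫⁻ y in ⋃ n : ℕ, ball x (2 ^ (n + 1) * ρ) \ ball x (2 ^ n * ρ),
          μ (ball x (dist x y)) ^ (-p) * ENNReal.ofReal ((ρ / dist x y) ^ b) ∂μ :=
        lintegral_mono_set (compl_ball_subset_iUnion_annulus hρ)
    _ ≤ ∑' n : ℕ, ∫⁻ y in ball x (2 ^ (n + 1) * ρ) \ ball x (2 ^ n * ρ),
          μ (ball x (dist x y)) ^ (-p) * ENNReal.ofReal ((ρ / dist x y) ^ b) ∂μ :=
        lintegral_iUnion_le _ _
    _ ≤ ∑' n : ℕ, ENNReal.ofReal C * ENNReal.ofReal r ^ n * μ (ball x ρ) ^ (1 - p) :=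
        ENNReal.tsum_le_tsum (setLIntegral_annulus_le hC hp hp1 hb hρ hpos hfin hdoub)
    _ = _ := by
        rw [ENNReal.tsum_mul_right, ENNReal.tsum_mul_left, ENNReal.tsum_geometric,
          ENNReal.ofReal_mul hC, ENNReal.ofReal_inv_of_pos (by linarith),
          ENNReal.ofReal_sub 1 (by positivity), ENNReal.ofReal_one]

end Doubling

theorem rpow_mul_two_rpow_neg_lt_one {C e b : ℝ} (hC : 0 < C) (h : Real.logb 2 C * e < b) :
    C ^ e * 2 ^ (-b) < 1 := by
  rw [← Real.rpow_logb two_pos (by norm_num) hC, ← Real.rpow_mul zero_le_two,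
    ← Real.rpow_add two_pos]
  exact Real.rpow_lt_one_of_one_lt_of_neg one_lt_two (by linarith)

theorem two_mul_div_add_two_mul_le_one {α β : ℝ} (hα : 0 ≤ α) (hβ : 0 < β) :
    2 * β / (α + 2 * β) ≤ 1 :=
  (div_le_one (by linarith)).mpr (by linarith)

theorem mul_div_two_sub_lt_of_lt_two_mul_div {α β ε : ℝ} (hα : 0 ≤ α) (hβ : 0 < β)
    (hε : ε ∈ Ioo 0 (2 * β / (α + 2 * β))) :
    α * (ε / (2 - ε)) < β * (2 / (2 - ε)) * (1 - ε) := by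
  obtain ⟨hε0, hεlt⟩ := hε
  have hε1 : ε < 1 := hεlt.trans_le (two_mul_div_add_two_mul_le_one hα hβ)
  have hcross : ε * (α + 2 * β) < 2 * β := (lt_div_iff₀ (by linarith)).mp hεlt
  rw [mul_div_assoc', mul_div_assoc', div_mul_eq_mul_div]
  exact div_lt_div_of_pos_right (by linarith) (by linarith)

theorem tail_integral_estimate_general {M : Type*} [MetricSpace M] [MeasurableSpace M]
    (μ : Measure M)
    -- volume doubling with constant `C_VD ∈ (1,∞)` (in particular full support)
    (C_VD : ℝ) (hCVD : 1 < C_VD)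
    (hVD : ∀ x : M, ∀ r : ℝ, 0 < r →
      0 < μ (Metric.ball x r) ∧
      μ (Metric.ball x (2 * r)) ≤ ENNReal.ofReal C_VD * μ (Metric.ball x r) ∧
      μ (Metric.ball x r) < ⊤)
    (β₁ ε : ℝ) (hβ₁ : 0 < β₁)
    (hε : ε ∈ Set.Ioo (0 : ℝ) (2 * β₁ / (Real.logb 2 C_VD + 2 * β₁))) :
    ∃ C : ℝ, 0 < C ∧ ∀ x : M, ∀ ρ : ℝ, 0 < ρ →
      ∫⁻ y in (Metric.ball x ρ)ᶜ,
          (μ (Metric.ball x (dist x y))) ^ (-(2 / (2 - ε) * (1 - ε))) *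
            ENNReal.ofReal ((ρ / dist x y) ^ (β₁ * (2 / (2 - ε)) * (1 - ε))) ∂μ ≤
        ENNReal.ofReal C * (μ (Metric.ball x ρ)) ^ (ε / (2 - ε)) := by
  have hα : 0 ≤ Real.logb 2 C_VD := Real.logb_nonneg one_lt_two hCVD.le
  have hε1 : ε < 1 := hε.2.trans_le (two_mul_div_add_two_mul_le_one hα hβ₁)
  have h2ε : 0 < 2 - ε := by linarith
  have hexp : 1 - 2 / (2 - ε) * (1 - ε) = ε / (2 - ε) := by field_simp; ring
  have hp : 0 ≤ 2 / (2 - ε) * (1 - ε) := mul_nonneg (by positivity) (by linarith)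
  have hp1 : 2 / (2 - ε) * (1 - ε) ≤ 1 := by linarith [div_pos hε.1 h2ε]
  have hb : 0 ≤ β₁ * (2 / (2 - ε)) * (1 - ε) := mul_nonneg (by positivity) (by linarith)
  have hratio := rpow_mul_two_rpow_neg_lt_one (by linarith)
    (mul_div_two_sub_lt_of_lt_two_mul_div hα hβ₁ hε)
  refine ⟨C_VD * (1 - C_VD ^ (ε / (2 - ε)) * 2 ^ (-(β₁ * (2 / (2 - ε)) * (1 - ε))))⁻¹,
    mul_pos (by linarith) (inv_pos.mpr (by linarith)), fun x ρ hρ => ?_⟩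
  have hbound := lintegral_compl_ball_le (by linarith) hp hp1 hb hρ
    (fun r hr => (hVD x r hr).1.ne') (fun r hr => (hVD x r hr).2.2.ne)
    (fun r hr => (hVD x r hr).2.1) (by rwa [hexp])
  rwa [hexp] at hbound

/-- Tail-integral estimate under volume doubling: for `α = log₂ C_VD`,
`ε ∈ (0, 2β₁/(α+2β₁))` and `q = 2/(2−ε)`, one has
`∫_{M∖B(x,ρ)} V(x,d(x,y))^{−q(1−ε)} (ρ/d(x,y))^{β₁q(1−ε)} dμ(y) ≤ C V(x,ρ)^{ε/(2−ε)}`. -/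
theorem tail_integral_estimate {M : Type*} [MetricSpace M] [MeasurableSpace M] [BorelSpace M]
    (μ : Measure M)
    -- volume doubling with constant `C_VD ∈ (1,∞)` (in particular full support)
    (C_VD : ℝ) (hCVD : 1 < C_VD)
    (hVD : ∀ x : M, ∀ r : ℝ, 0 < r →
      0 < μ (Metric.ball x r) ∧
      μ (Metric.ball x (2 * r)) ≤ ENNReal.ofReal C_VD * μ (Metric.ball x r) ∧
      μ (Metric.ball x r) < ⊤)
    (β₁ ε : ℝ) (hβ₁ : 0 < β₁)
    (hε : ε ∈ Set.Ioo (0 : ℝ) (2 * β₁ / (Real.logb 2 C_VD + 2 * β₁))) :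
    ∃ C : ℝ, 0 < C ∧ ∀ x : M, ∀ ρ : ℝ, 0 < ρ →
      ∫⁻ y in (Metric.ball x ρ)ᶜ,
          (μ (Metric.ball x (dist x y))) ^ (-(2 / (2 - ε) * (1 - ε))) *
            ENNReal.ofReal ((ρ / dist x y) ^ (β₁ * (2 / (2 - ε)) * (1 - ε))) ∂μ ≤
        ENNReal.ofReal C * (μ (Metric.ball x ρ)) ^ (ε / (2 - ε)) :=
  tail_integral_estimate_general μ C_VD hCVD hVD β₁ ε hβ₁ hε
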